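/- arXiv:2103.15063 — 2 statements merged into one kernel-verified Lean document; each statement's English description precedes it below -/
import Mathlib

section
/- Let n be an even natural number with 4 ≤ n and let κ, η be real numbers. For every k with 1 ≤ k < n/2 and k odd, the sum of d_s(u,v) over all unordered pairs {u,v} with cycle distance k equals (n·k/2)·(κ + η). (For each such k, exactly n/2 of the n pairs have geodesic weight ((k+1)/2)·κ + ((k−1)/2)·η and the other n/2 pairs have geodesic weight ((k+1)/2)·η + ((k−1)/2)·κ.) -/
/-- Edge weight: the edge from `i` to `i+1` has weight `κ` if `i.val` is even,
and `η` if `i.val` is odd. -/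
noncomputable def w (n : ℕ) (κ η : ℝ) (i : ZMod n) : ℝ :=
  if Even i.val then κ else η

/-- Forward arc weight: `A u k = Σ_{j=0}^{k-1} w (u + j)`. -/
noncomputable def A (n : ℕ) (κ η : ℝ) (u : ZMod n) (k : ℕ) : ℝ :=
  ∑ j ∈ Finset.range k, w n κ η (u + (j : ZMod n))

/-- Cycle distance: `min (m, n - m)` where `v = u + m`, `0 ≤ m < n`. -/
def cdist (n : ℕ) (u v : ZMod n) : ℕ :=
  min (v - u).val (n - (v - u).val)

/-- Geodesic weight between `u` and `v`. -/
noncomputable def ds (n : ℕ) (κ η : ℝ) (u v : ZMod n) : ℝ :=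
  if u = v then 0
  else if cdist n u v < n / 2 then
    (if v = u + (cdist n u v : ZMod n) then A n κ η u (cdist n u v)
     else A n κ η v (cdist n u v))
  else min (A n κ η u (n / 2)) (A n κ η v (n / 2))

/-- Wiener index: sum of `ds` over unordered pairs of distinct vertices. -/
noncomputable def WI (n : ℕ) [NeZero n] (κ η : ℝ) : ℝ :=
  (1 / 2) * ∑ u : ZMod n, ∑ v : ZMod n, ds n κ η u v

/-! For `0 < k < n / 2` the vertices at cycle distance `k` from `u` are exactly `u + k` and `u - k`,
joined to `u` by the arcs of length `k` starting at `u` and at `u - k`. Summing over ordered pairs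
therefore counts every such arc twice, and summing the arc weights `A u k` over all `u` counts every
edge `k` times; for even `n` the edges weigh `(n / 2) (κ + η)` in total. -/

open Finset

namespace ZMod

theorem eq_natCast_iff_val_eq {n k : ℕ} (hk : k < n) (a : ZMod n) : a = k ↔ a.val = k := by
  have : NeZero n := ⟨by omega⟩
  constructor
  · rintro rfl
    exact val_natCast_of_lt hk
  · intro h
    rw [← h, natCast_zmod_val]

theorem add_natCast_ne_sub_natCast {n k : ℕ} (hk0 : 0 < k) (hk : 2 * k < n) (u : ZMod n) :
    u + k ≠ u - k := by
  intro h
  have h2k : ((2 * k : ℕ) : ZMod n) = 0 := by push_cast; linear_combination h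
  have := Nat.eq_zero_of_dvd_of_lt ((natCast_eq_zero_iff _ _).1 h2k) hk
  omega

theorem sum_comp_val {n : ℕ} [NeZero n] {M : Type*} [AddCommMonoid M] (g : ℕ → M) :
    ∑ u : ZMod n, g u.val = ∑ i ∈ range n, g i := by
  cases n with
  | zero => exact absurd rfl (NeZero.ne 0)
  | succ m => exact Fin.sum_univ_eq_sum_range g (m + 1)

end ZMod

theorem sum_range_two_mul_ite_even {M : Type*} [AddCommMonoid M] (a b : M) (t : ℕ) :
    ∑ i ∈ range (2 * t), (if Even i then a else b) = t • (a + b) := by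
  induction t with
  | zero => simp
  | succ t ih =>
    rw [Nat.mul_succ, sum_range_succ, sum_range_succ, ih, if_pos (even_two_mul t),
      if_neg (Nat.not_even_iff_odd.2 (odd_two_mul_add_one t)), succ_nsmul, add_assoc]

section CycleDistance

variable {n : ℕ}

theorem cdist_self (u : ZMod n) : cdist n u u = 0 := by
  simp [cdist]

theorem cdist_eq_iff [NeZero n] {k : ℕ} (hk : 2 * k ≤ n) (u v : ZMod n) :
    cdist n u v = k ↔ v = u + k ∨ v = u - k := by
  have hkn : k < n := by have := NeZero.pos n; omega
  have hadd : v = u + k ↔ v - u = k := by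
    constructor <;> intro h <;> linear_combination h
  have hsub : v = u - k ↔ -(v - u) = k := by
    constructor <;> intro h <;> linear_combination -h
  rw [hadd, hsub, ZMod.eq_natCast_iff_val_eq hkn, ZMod.eq_natCast_iff_val_eq hkn, ZMod.neg_val,
    cdist]
  have := ZMod.val_lt (v - u)
  split_ifs with h
  · simp only [h, ZMod.val_zero]
    omega
  · omega

theorem sum_ite_cdist_eq {M : Type*} [AddCommMonoid M] [NeZero n] {k : ℕ} (hk0 : 0 < k)
    (hk : 2 * k < n) (u : ZMod n) (f : ZMod n → M) :
    ∑ v, (if cdist n u v = k then f v else 0) = f (u + k) + f (u - k) := by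
  have hfiber : univ.filter (fun v => cdist n u v = k) = {u + (k : ZMod n), u - (k : ZMod n)} := by
    ext v
    simp [cdist_eq_iff hk.le]
  rw [← sum_filter, hfiber, sum_pair (ZMod.add_natCast_ne_sub_natCast hk0 hk u)]

end CycleDistance

section Weights

variable {n : ℕ} [NeZero n] (κ η : ℝ)

theorem ds_add_natCast {k : ℕ} (hk : k < n / 2) (u : ZMod n) :
    ds n κ η u (u + k) = A n κ η u k := by
  have hcd : cdist n u (u + k) = k := (cdist_eq_iff (by omega) _ _).2 (Or.inl rfl)
  rw [ds, hcd, if_pos hk, if_pos rfl, ite_eq_right_iff]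
  intro h
  obtain rfl : k = 0 := by rw [← hcd, ← h, cdist_self]
  simp [A]

theorem ds_sub_natCast {k : ℕ} (hk : k < n / 2) (u : ZMod n) :
    ds n κ η u (u - k) = A n κ η (u - k) k := by
  have hcd : cdist n u (u - k) = k := (cdist_eq_iff (by omega) _ _).2 (Or.inr rfl)
  rw [ds, hcd, if_pos hk]
  split_ifs with h h'
  · obtain rfl : k = 0 := by rw [← hcd, ← h, cdist_self]
    simp [A]
  · have hk0 : 0 < k := Nat.pos_of_ne_zero (by rintro rfl; simp at h)
    exact absurd h'.symm (ZMod.add_natCast_ne_sub_natCast hk0 (by omega) u)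
  · rfl

theorem sum_w_of_even (hn : Even n) : ∑ u : ZMod n, w n κ η u = (n / 2 : ℝ) * (κ + η) := by
  obtain ⟨t, rfl⟩ := hn
  refine (ZMod.sum_comp_val fun i => if Even i then κ else η).trans ?_
  rw [← two_mul, sum_range_two_mul_ite_even, nsmul_eq_mul]
  push_cast
  ring

theorem sum_A (k : ℕ) : ∑ u : ZMod n, A n κ η u k = k * ∑ u : ZMod n, w n κ η u := by
  have hshift (j : ℕ) : ∑ u : ZMod n, w n κ η (u + j) = ∑ u : ZMod n, w n κ η u :=
    Fintype.sum_equiv (Equiv.addRight _) _ _ fun _ => rfl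
  simp only [A]
  rw [sum_comm]
  simp only [hshift, sum_const, card_range, nsmul_eq_mul]

theorem sum_A_sub_natCast (k : ℕ) :
    ∑ u : ZMod n, A n κ η (u - k) k = ∑ u : ZMod n, A n κ η u k :=
  Fintype.sum_equiv (Equiv.subRight _) _ _ fun _ => rfl

end Weights

theorem sum_ds_odd_distance_general
    (n : ℕ) [NeZero n] (hE : Even n) (κ η : ℝ)
    (k : ℕ) (hk1 : 1 ≤ k) (hk2 : k < n / 2) :
    (1 / 2) * ∑ u : ZMod n, ∑ v : ZMod n,
        (if cdist n u v = k then ds n κ η u v else 0)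
      = ((n : ℝ) * (k : ℝ) / 2) * (κ + η) := by
  have hk : 2 * k < n := by omega
  calc (1 / 2) * ∑ u : ZMod n, ∑ v : ZMod n, (if cdist n u v = k then ds n κ η u v else 0)
      = (1 / 2) * ∑ u : ZMod n, (A n κ η u k + A n κ η (u - k) k) := by
        simp only [sum_ite_cdist_eq hk1 hk, ds_add_natCast κ η hk2, ds_sub_natCast κ η hk2]
    _ = k * ∑ u : ZMod n, w n κ η u := by
        rw [sum_add_distrib, sum_A_sub_natCast, sum_A]
        ring
    _ = ((n : ℝ) * (k : ℝ) / 2) * (κ + η) := by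
        rw [sum_w_of_even κ η hE]
        ring

theorem sum_ds_odd_distance
    (n : ℕ) [NeZero n] (hE : Even n) (h4 : 4 ≤ n) (κ η : ℝ)
    (k : ℕ) (hk1 : 1 ≤ k) (hk2 : k < n / 2) (hko : Odd k) :
    (1 / 2) * ∑ u : ZMod n, ∑ v : ZMod n,
        (if cdist n u v = k then ds n κ η u v else 0)
      = ((n : ℝ) * (k : ℝ) / 2) * (κ + η) :=
  sum_ds_odd_distance_general n hE κ η k hk1 hk2
end

section
/- Let n be an even natural number with 4 ≤ n and let κ, η be real numbers with 0 < η ≤ κ. Then the Wiener index of the saturated fuzzy cycle is strictly less than the value claimed by the original (incorrect) theorem: WI(n,κ,η) < (n·((n+3)^2 − 6)/16)·(κ + η). In particular the original formula WI(n,κ,η) = (n·((n+3)^2 − 6)/16)·(κ + η) fails for every such n, κ, η. -/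
/-! Around the cycle the edge weights alternate between `κ` and `η`, so every two consecutive edges
weigh `κ + η` and an arc of `k` edges weighs at most `⌈k/2⌉ (κ + η)` (the leftover edge weighs at
most `κ ≤ κ + η`). Since `⌈k/2⌉ ≤ (k + 1)/2` and the cycle distances from a vertex sum to `n²/4`,
`WI ≤ n (n² + 4n)/16 · (κ + η)`, which falls short of the claimed `n (n² + 6n + 3)/16 · (κ + η)`
by `n (2n + 3)/16 · (κ + η) > 0`. -/

section SaturatedCycle

variable {n : ℕ} [NeZero n] {κ η : ℝ}

theorem even_val_add_one_iff (hn : Even n) (i : ZMod n) :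
    Even (i + 1).val ↔ ¬Even i.val := by
  have hcast : (((i + 1).val : ℕ) : ZMod 2) = (i.val : ZMod 2) + 1 := by
    have h2 := even_iff_two_dvd.mp hn
    rw [← ZMod.cast_eq_val, ← ZMod.cast_eq_val, ← ZMod.castHom_apply (h := h2),
      ← ZMod.castHom_apply (h := h2), map_add, map_one]
  rw [← ZMod.natCast_eq_zero_iff_even, ← ZMod.natCast_eq_zero_iff_even, hcast]
  generalize (i.val : ZMod 2) = x
  revert x
  decide

theorem w_add_w_add_one (hn : Even n) (i : ZMod n) :
    w n κ η i + w n κ η (i + 1) = κ + η := by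
  by_cases hi : Even i.val
  · simp [w, hi, even_val_add_one_iff hn]
  · simp [w, hi, even_val_add_one_iff hn, add_comm]

theorem A_add_two (hn : Even n) (u : ZMod n) (k : ℕ) :
    A n κ η u (k + 2) = A n κ η u k + (κ + η) := by
  rw [A, Finset.sum_range_succ, Finset.sum_range_succ, add_assoc, A, Nat.cast_succ, ← add_assoc u,
    w_add_w_add_one hn]

theorem A_le (hn : Even n) (hη : 0 ≤ η) (hηκ : η ≤ κ) (u : ZMod n) (k : ℕ) :
    A n κ η u k ≤ ((k + 1) / 2 : ℕ) * (κ + η) := by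
  induction k using Nat.twoStepInduction with
  | zero => simp [A]
  | one =>
    have : w n κ η u ≤ κ := by unfold w; split_ifs <;> linarith
    simpa [A] using this.trans (le_add_of_nonneg_right hη)
  | more k ih _ =>
    rw [A_add_two hn, show (k + 2 + 1) / 2 = (k + 1) / 2 + 1 by omega, Nat.cast_succ]
    linarith

theorem cdist_le_half (u v : ZMod n) : cdist n u v ≤ n / 2 := by
  have := ZMod.val_lt (v - u); unfold cdist; omega

theorem ds_le (hn : Even n) (hη : 0 ≤ η) (hηκ : η ≤ κ) (u v : ZMod n) :
    ds n κ η u v ≤ ((cdist n u v + 1) / 2 : ℕ) * (κ + η) := by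
  unfold ds
  split_ifs
  · exact mul_nonneg (Nat.cast_nonneg _) (by linarith)
  · exact A_le hn hη hηκ u _
  · exact A_le hn hη hηκ v _
  · rw [show cdist n u v = n / 2 by have := cdist_le_half u v; omega]
    exact (min_le_left _ _).trans (A_le hn hη hηκ u _)

theorem sum_range_min_sub (t : ℕ) : ∑ i ∈ Finset.range (2 * t), min i (2 * t - i) = t * t := by
  rw [two_mul, Finset.sum_range_add, ← Finset.sum_add_distrib,
    Finset.sum_congr rfl fun i hi => show min i (t + t - i) + min (t + i) (t + t - (t + i)) = t by
      simp only [Finset.mem_range] at hi; omega]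
  simp

theorem sum_comp_val_eq_sum_range {M : Type*} [AddCommMonoid M] (f : ℕ → M) :
    ∑ m : ZMod n, f m.val = ∑ i ∈ Finset.range n, f i := by
  refine Finset.sum_nbij' ZMod.val (fun i => (i : ZMod n)) ?_ ?_ ?_ ?_ fun _ _ => rfl
  · simp [ZMod.val_lt]
  · simp
  · simp
  · intro i hi
    exact ZMod.val_cast_of_lt (Finset.mem_range.mp hi)

theorem sum_cdist (hn : Even n) (u : ZMod n) : ∑ v, cdist n u v = (n / 2) * (n / 2) := by
  obtain ⟨t, rfl⟩ := hn
  rw [Fintype.sum_equiv (Equiv.subRight u) (cdist (t + t) u) (fun m => min m.val (t + t - m.val))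
      fun _ => rfl, sum_comp_val_eq_sum_range fun i => min i (t + t - i), ← two_mul,
    sum_range_min_sub, Nat.mul_div_cancel_left _ two_pos]

theorem sum_ds_le (hn : Even n) (hη : 0 ≤ η) (hηκ : η ≤ κ) (u : ZMod n) :
    ∑ v, ds n κ η u v ≤ (((n : ℝ) / 2) ^ 2 + n) / 2 * (κ + η) := by
  calc ∑ v, ds n κ η u v ≤ ∑ v, ((cdist n u v : ℝ) + 1) / 2 * (κ + η) := by
        refine Finset.sum_le_sum fun v _ => (ds_le hn hη hηκ u v).trans ?_
        gcongr
        · linarith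
        · exact Nat.cast_div_le.trans (by push_cast; rfl)
    _ = (((∑ v, cdist n u v : ℕ) : ℝ) + n) / 2 * (κ + η) := by
        rw [← Finset.sum_mul, ← Finset.sum_div, Finset.sum_add_distrib]
        simp
    _ = (((n : ℝ) / 2) ^ 2 + n) / 2 * (κ + η) := by
        rw [sum_cdist hn, Nat.cast_mul, Nat.cast_div (even_iff_two_dvd.mp hn) two_ne_zero]
        push_cast
        ring

theorem WI_le (hn : Even n) (hη : 0 ≤ η) (hηκ : η ≤ κ) :
    WI n κ η ≤ n * (((n : ℝ) / 2) ^ 2 + n) / 4 * (κ + η) := by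
  calc WI n κ η ≤ 1 / 2 * ∑ _u : ZMod n, (((n : ℝ) / 2) ^ 2 + n) / 2 * (κ + η) := by
        unfold WI
        gcongr with u
        exact sum_ds_le hn hη hηκ u
    _ = n * (((n : ℝ) / 2) ^ 2 + n) / 4 * (κ + η) := by
        simp only [Finset.sum_const, Finset.card_univ, ZMod.card, nsmul_eq_mul]
        ring

end SaturatedCycle

theorem original_formula_fails_general
    (n : ℕ) [NeZero n] (hE : Even n)
    (κ η : ℝ) (hη : 0 < η) (hηκ : η ≤ κ) :
    WI n κ η < ((n : ℝ) * (((n : ℝ) + 3) ^ 2 - 6) / 16) * (κ + η) ∧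
    WI n κ η ≠ ((n : ℝ) * (((n : ℝ) + 3) ^ 2 - 6) / 16) * (κ + η) := by
  have hlt : WI n κ η < ((n : ℝ) * (((n : ℝ) + 3) ^ 2 - 6) / 16) * (κ + η) := by
    have hn : (0 : ℝ) < n := Nat.cast_pos.mpr (Nat.pos_of_neZero n)
    have hgap : (0 : ℝ) < n * (2 * n + 3) / 16 * (κ + η) := mul_pos (by positivity) (by linarith)
    calc WI n κ η ≤ n * (((n : ℝ) / 2) ^ 2 + n) / 4 * (κ + η) := WI_le hE hη.le hηκ
      _ < ((n : ℝ) * (((n : ℝ) + 3) ^ 2 - 6) / 16) * (κ + η) := by linarith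
  exact ⟨hlt, hlt.ne⟩

theorem original_formula_fails
    (n : ℕ) [NeZero n] (hE : Even n) (h4 : 4 ≤ n)
    (κ η : ℝ) (hη : 0 < η) (hηκ : η ≤ κ) :
    WI n κ η < ((n : ℝ) * (((n : ℝ) + 3) ^ 2 - 6) / 16) * (κ + η) ∧
    WI n κ η ≠ ((n : ℝ) * (((n : ℝ) + 3) ^ 2 - 6) / 16) * (κ + η) :=
  original_formula_fails_general n hE κ η hη hηκ
end
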